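/- Suppose b₁ = 0, b₂⁺ = 1, and b₂⁻ ≥ 0. Set σ = b₂⁺ − b₂⁻, e = 2 − 2b₁ + b₂⁺ + b₂⁻, χ_f = (σ+e)/4 + (g−1), K_f² = 3σ + 2e + 8(g−1). Then χ_f = g, and if moreover K_f² ≥ 4(g−1), then for g ≥ 2 the slope λ_f = K_f²/χ_f satisfies (4g−4)/g ≤ λ_f ≤ 8 + 1/g. -/

import Mathlib

/-! Since `σ + e = 4`, the formula for `χ_f` collapses to `g`, and `K_f² = 8g + 1 - b₂⁻`.
Dividing by `χ_f = g > 0`, the upper bound is `b₂⁻ ≥ 0` and the lower bound is the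
hypothesis `K_f² ≥ 4(g - 1)`. -/

theorem div_le_add_one_div {α : Type*} [Field α] [LinearOrder α] [IsStrictOrderedRing α]
    {a x y : α} (hy : 0 < y) (h : x ≤ a * y + 1) : x / y ≤ a + 1 / y := by
  rwa [div_le_iff₀ hy, add_mul, one_div_mul_cancel hy.ne']

/-- Slope bounds for b₁ = 0, b₂⁺ = 1: χ_f = g and
(4g−4)/g ≤ λ_f ≤ 8 + 1/g whenever K_f² ≥ 4(g−1). -/
theorem slope_bounds_b1_zero (g : ℕ) (hg : 2 ≤ g) (b₂m : ℕ)
    (σ e χ K : ℚ)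
    (hσ : σ = 1 - (b₂m : ℚ)) (he : e = 2 - 2 * 0 + 1 + (b₂m : ℚ))
    (hχ : χ = (σ + e) / 4 + ((g : ℚ) - 1))
    (hK : K = 3 * σ + 2 * e + 8 * ((g : ℚ) - 1)) :
    χ = (g : ℚ) ∧
    (K ≥ 4 * ((g : ℚ) - 1) →
      (4 * (g : ℚ) - 4) / (g : ℚ) ≤ K / χ ∧ K / χ ≤ 8 + 1 / (g : ℚ)) := by
  have hg_pos : (0 : ℚ) < g := by exact_mod_cast (by omega : 0 < g)
  have hσe : σ + e = 4 := by rw [hσ, he]; ring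
  have hχg : χ = g := by rw [hχ, hσe]; ring
  have hKg : K = 8 * g + 1 - b₂m := by rw [hK, hσ, he]; ring
  refine ⟨hχg, fun hK_ge => ⟨?_, ?_⟩⟩
  · rw [hχg]
    exact div_le_div_of_nonneg_right (by linarith) hg_pos.le
  · rw [hχg]
    exact div_le_add_one_div hg_pos (by rw [hKg]; linarith [b₂m.cast_nonneg (α := ℚ)])
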